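/- Let φ: A ↠ B be a surjective morphism of synchronous algebras and Acc ⊆ B a closed subset. Then for all a, a' ∈ A: a ~_{φ⁻¹[Acc]} a' if and only if φ(a) ~_{Acc} φ(a'). -/

import Mathlib

/-- Letter-types: `l` for a pair of proper letters, `p` for (letter, padding),
`q` for (padding, letter). -/
inductive LTy | l | p | q
deriving DecidableEq

/-- The five types of (well-formed) synchronous words:
`ll`, `ll→lb` (= `lllb`), `lb`, `ll→bl` (= `llbl`), `bl`. -/
inductive STy | ll | lllb | lb | llbl | bl
deriving DecidableEq

namespace STy

/-- Letter-type of the first letter. -/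
def src : STy → LTy
  | ll => .l | lllb => .l | lb => .p | llbl => .l | bl => .q

/-- Letter-type of the last letter. -/
def tgt : STy → LTy
  | ll => .l | lllb => .p | lb => .p | llbl => .q | bl => .q

/-- `σ = α→β` is compatible with `τ = β'→γ` iff `β = β'` or `β = ll`. -/
def compat (σ τ : STy) : Prop := σ.tgt = τ.src ∨ σ.tgt = LTy.l

/-- Product of compatible types (junk on incompatible pairs). -/
def comp : STy → STy → STy
  | ll, ll => ll
  | ll, lllb => lllb
  | ll, lb => lllb
  | ll, llbl => llbl
  | ll, bl => llbl
  | lllb, _ => lllb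
  | lb, _ => lb
  | llbl, _ => llbl
  | bl, _ => bl

end STy

/-- A synchronous algebra: a `STy`-typed set with a dependency relation and a
partial associative product defined exactly on compatible pairs, monotone with
respect to dependency, with units.  The partial product is modelled as an
`Option`-valued total product. -/
structure SyncAlg where
  A : Type
  ty : A → STy
  dep : A → A → Prop
  mul : A → A → Option A
  dep_refl : ∀ x, dep x x
  dep_symm : ∀ {x y}, dep x y → dep y x
  dep_eq : ∀ {x y}, dep x y → ty x = ty y → x = y
  mul_defined : ∀ x y, (mul x y).isSome ↔ (ty x).compat (ty y)
  ty_mul : ∀ {x y z}, mul x y = some z → ty z = (ty x).comp (ty y)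
  mul_assoc : ∀ x y z,
    (mul x y).bind (fun a => mul a z) = (mul y z).bind (fun b => mul x b)
  dep_mul_left : ∀ {x x' y z z'}, dep x x' →
    mul x y = some z → mul x' y = some z' → dep z z'
  dep_mul_right : ∀ {x x' y z z'}, dep x x' →
    mul y x = some z → mul y x' = some z' → dep z z'
  unit : STy → A
  ty_unit : ∀ τ, ty (unit τ) = τ
  unit_mul : ∀ {τ x z}, mul (unit τ) x = some z → dep z x
  mul_unit : ∀ {τ x z}, mul x (unit τ) = some z → dep z x
  unit_lllb : mul (unit .ll) (unit .lb) = some (unit .lllb)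
  unit_llbl : mul (unit .ll) (unit .bl) = some (unit .llbl)

namespace SyncAlg

/-- A closed subset of a synchronous algebra: saturated under dependency. -/
def Closed (S : SyncAlg) (C : Set S.A) : Prop :=
  ∀ {x y : S.A}, S.dep x y → (x ∈ C ↔ y ∈ C)

/-- Two-sided partial product `x·a·y`. -/
def mul3 (S : SyncAlg) (x a y : S.A) : Option S.A :=
  (S.mul x a).bind fun u => S.mul u y

/-- The syntactic congruence of a subset `C` of a synchronous algebra. -/
def synCong (S : SyncAlg) (C : Set S.A) (a b : S.A) : Prop :=
  (∀ x y u v, S.mul3 x a y = some u → S.mul3 x b y = some v → (u ∈ C ↔ v ∈ C)) ∧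
  (∀ x u v, S.mul x a = some u → S.mul x b = some v → (u ∈ C ↔ v ∈ C)) ∧
  (∀ y u v, S.mul a y = some u → S.mul b y = some v → (u ∈ C ↔ v ∈ C))

/-- Left residual `x⁻¹C` of a closed subset `C` by an element `x`. -/
def lres (S : SyncAlg) (x : S.A) (C : Set S.A) : Set S.A :=
  { y | ∃ y' u, S.synCong C y' y ∧ S.mul x y' = some u ∧ u ∈ C }

/-- Right residual `C·x⁻¹` of a closed subset `C` by an element `x`. -/
def rres (S : SyncAlg) (x : S.A) (C : Set S.A) : Set S.A :=
  { y | ∃ y' u, S.synCong C y' y ∧ S.mul y' x = some u ∧ u ∈ C }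

end SyncAlg

/-- Morphisms of synchronous algebras: preserve types, units, product and
dependency. -/
structure SyncHom (S T : SyncAlg) where
  toFun : S.A → T.A
  map_ty : ∀ x, T.ty (toFun x) = S.ty x
  map_unit : ∀ τ, toFun (S.unit τ) = T.unit τ
  map_mul : ∀ {x y z}, S.mul x y = some z →
    T.mul (toFun x) (toFun y) = some (toFun z)
  map_dep : ∀ {x y}, S.dep x y → T.dep (toFun x) (toFun y)

namespace SyncHom

variable {S T : SyncAlg} (φ : SyncHom S T)

/-- Products are defined exactly on compatible types and morphisms preserve types, so a morphism
reflects definedness of products. -/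
lemma exists_mul_eq_of_map {x y : S.A} {w : T.A} (h : T.mul (φ.toFun x) (φ.toFun y) = some w) :
    ∃ z, S.mul x y = some z ∧ φ.toFun z = w := by
  have hcompat : (S.ty x).compat (S.ty y) := by
    rw [← φ.map_ty, ← φ.map_ty, ← T.mul_defined, h]
    rfl
  obtain ⟨z, hz⟩ := Option.isSome_iff_exists.mp ((S.mul_defined x y).mpr hcompat)
  refine ⟨z, hz, ?_⟩
  exact Option.some_inj.mp (by rw [← φ.map_mul hz, h])

lemma map_mul3 {x a y u : S.A} (h : S.mul3 x a y = some u) :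
    T.mul3 (φ.toFun x) (φ.toFun a) (φ.toFun y) = some (φ.toFun u) := by
  obtain ⟨p, hp, hpu⟩ := Option.bind_eq_some_iff.mp h
  simp only [SyncAlg.mul3, φ.map_mul hp, Option.bind_some, φ.map_mul hpu]

lemma exists_mul3_eq_of_map {x a y : S.A} {w : T.A}
    (h : T.mul3 (φ.toFun x) (φ.toFun a) (φ.toFun y) = some w) :
    ∃ u, S.mul3 x a y = some u ∧ φ.toFun u = w := by
  obtain ⟨p, hp, hpw⟩ := Option.bind_eq_some_iff.mp h
  obtain ⟨p₀, hp₀, rfl⟩ := φ.exists_mul_eq_of_map hp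
  obtain ⟨u, hu, rfl⟩ := φ.exists_mul_eq_of_map hpw
  exact ⟨u, by simp only [SyncAlg.mul3, hp₀, Option.bind_some, hu], rfl⟩

lemma synCong_preimage_of_synCong {C : Set T.A} {a a' : S.A}
    (h : T.synCong C (φ.toFun a) (φ.toFun a')) : S.synCong (φ.toFun ⁻¹' C) a a' := by
  obtain ⟨h3, hl, hr⟩ := h
  exact ⟨fun x y u v hu hv => h3 _ _ _ _ (φ.map_mul3 hu) (φ.map_mul3 hv),
    fun x u v hu hv => hl _ _ _ (φ.map_mul hu) (φ.map_mul hv),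
    fun y u v hu hv => hr _ _ _ (φ.map_mul hu) (φ.map_mul hv)⟩

lemma synCong_of_synCong_preimage (hφ : Function.Surjective φ.toFun) {C : Set T.A}
    {a a' : S.A} (h : S.synCong (φ.toFun ⁻¹' C) a a') :
    T.synCong C (φ.toFun a) (φ.toFun a') := by
  obtain ⟨h3, hl, hr⟩ := h
  refine ⟨?_, ?_, ?_⟩
  · intro x y u v hu hv
    obtain ⟨x₀, rfl⟩ := hφ x
    obtain ⟨y₀, rfl⟩ := hφ y
    obtain ⟨u₀, hu₀, rfl⟩ := φ.exists_mul3_eq_of_map hu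
    obtain ⟨v₀, hv₀, rfl⟩ := φ.exists_mul3_eq_of_map hv
    exact h3 x₀ y₀ u₀ v₀ hu₀ hv₀
  · intro x u v hu hv
    obtain ⟨x₀, rfl⟩ := hφ x
    obtain ⟨u₀, hu₀, rfl⟩ := φ.exists_mul_eq_of_map hu
    obtain ⟨v₀, hv₀, rfl⟩ := φ.exists_mul_eq_of_map hv
    exact hl x₀ u₀ v₀ hu₀ hv₀
  · intro y u v hu hv
    obtain ⟨y₀, rfl⟩ := hφ y
    obtain ⟨u₀, hu₀, rfl⟩ := φ.exists_mul_eq_of_map hu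
    obtain ⟨v₀, hv₀, rfl⟩ := φ.exists_mul_eq_of_map hv
    exact hr y₀ u₀ v₀ hu₀ hv₀

end SyncHom

theorem synCong_preimage_general (S T : SyncAlg) (φ : SyncHom S T)
    (hφ : Function.Surjective φ.toFun) (Acc : Set T.A) :
    ∀ a a' : S.A,
      S.synCong (φ.toFun ⁻¹' Acc) a a' ↔ T.synCong Acc (φ.toFun a) (φ.toFun a') :=
  fun _ _ => ⟨φ.synCong_of_synCong_preimage hφ, φ.synCong_preimage_of_synCong⟩

/-- If `φ : A ↠ B` is a surjective morphism of synchronous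
algebras and `Acc ⊆ B` is a closed subset, then for all `a, a' ∈ A`,
`a ~_{φ⁻¹[Acc]} a'` iff `φ(a) ~_{Acc} φ(a')`. -/
theorem synCong_preimage (S T : SyncAlg) (φ : SyncHom S T)
    (hφ : Function.Surjective φ.toFun) (Acc : Set T.A) (hAcc : T.Closed Acc) :
    ∀ a a' : S.A,
      S.synCong (φ.toFun ⁻¹' Acc) a a' ↔ T.synCong Acc (φ.toFun a) (φ.toFun a') :=
  synCong_preimage_general S T φ hφ Acc
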